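/- arXiv:1404.7230 — 8 statements merged into one kernel-verified Lean document; each statement's English description precedes it below -/
import Mathlib

section
/- For any oriented tree T^σ with matching number β(T), the skew-rank satisfies sr(T^σ) = 2β(T). -/
/-- S is the skew-adjacency matrix of some oriented graph: it is skew-symmetric
with entries in {0, 1, -1}. -/
def IsSkewAdjacency {V : Type} [Fintype V] [DecidableEq V] (S : Matrix V V ℝ) : Prop :=
  S.transpose = -S ∧ ∀ i j : V, S i j = 0 ∨ S i j = 1 ∨ S i j = -1

/-- S is the skew-adjacency matrix of an orientation of the simple graph G. -/
def IsSkewAdjacencyOf {V : Type} [Fintype V] [DecidableEq V]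
    (S : Matrix V V ℝ) (G : SimpleGraph V) : Prop :=
  IsSkewAdjacency S ∧ ∀ i j : V, S i j ≠ 0 ↔ G.Adj i j

/-- The matching number of a simple graph on a finite vertex set. -/
noncomputable def matchingNumber {V : Type} [Fintype V] (G : SimpleGraph V) : ℕ :=
  sSup {k | ∃ M : G.Subgraph, M.IsMatching ∧ M.edgeSet.ncard = k}

/-!
Induction on the forest. A forest with an edge has a leaf `v`, with neighbour `u`; delete all edges
at `u`. Row and column `v` of the skew-adjacency matrix are supported on `u` alone, so the rows and
columns `u, v` split off an invertible `2 × 2` block, and zeroing row and column `u` lowers the rank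
by exactly `2`. Deleting the edges at any vertex costs at most one edge of a matching, and `uv` can
be added to every matching of the smaller graph, so the matching number drops by exactly `1`.
-/

open Set Submodule

namespace Matrix

lemma updateCol_updateRow_zero_apply {m n α : Type*} [DecidableEq m] [DecidableEq n] [Zero α]
    (S : Matrix m n α) (r : m) (c : n) (i : m) (j : n) :
    (S.updateRow r 0).updateCol c 0 i j = if i = r ∨ j = c then 0 else S i j := by
  simp only [updateCol_apply, updateRow_apply, Pi.zero_apply]
  split_ifs <;> tauto

variable {K n : Type*} [Field K] [DecidableEq n] {S : Matrix n n K} {u v : n}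

lemma span_range_col_eq_span_pair_sup (hSuv : S u v ≠ 0) (hcol : ∀ i ≠ u, S i v = 0) :
    span K (range S.col) =
      span K {Pi.single u 1, S.col u} ⊔ span K (range ((S.updateRow u 0).updateCol u 0).col) := by
  set T := (S.updateRow u 0).updateCol u 0
  set e : n → K := Pi.single u 1
  have col_v : S.col v = S u v • e := by
    ext i
    rcases eq_or_ne i u with rfl | hi
    · simp [e]
    · simp [e, hcol i hi, hi]
  have col_eq : ∀ j ≠ u, S.col j = T.col j + S u j • e := by
    intro j hj
    ext i
    rcases eq_or_ne i u with rfl | hi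
    · simp [T, e, hj]
    · simp [T, e, hj, hi]
  have e_mem : e ∈ span K (range S.col) := by
    have : e = (S u v)⁻¹ • S.col v := by rw [col_v, smul_smul, inv_mul_cancel₀ hSuv, one_smul]
    exact this ▸ smul_mem _ _ (subset_span ⟨v, rfl⟩)
  apply le_antisymm
  · rw [span_le]
    rintro _ ⟨j, rfl⟩
    rcases eq_or_ne j u with rfl | hj
    · exact mem_sup_left (subset_span (by simp))
    · rw [col_eq j hj]
      exact add_mem (mem_sup_right (subset_span ⟨j, rfl⟩))
        (smul_mem _ _ (mem_sup_left (subset_span (by simp))))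
  · refine sup_le (span_le.2 ?_) (span_le.2 ?_)
    · rintro _ (rfl | rfl)
      exacts [e_mem, subset_span ⟨u, rfl⟩]
    · rintro _ ⟨j, rfl⟩
      rcases eq_or_ne j u with rfl | hj
      · have : T.col j = 0 := by ext i; simp [T]
        simp [this]
      · rw [eq_sub_of_add_eq (col_eq j hj).symm]
        exact sub_mem (subset_span ⟨j, rfl⟩) (smul_mem _ _ e_mem)

lemma span_range_col_updateCol_updateRow_le (hrow : ∀ j ≠ u, S v j = 0) :
    span K (range ((S.updateRow u 0).updateCol u 0).col) ≤
      LinearMap.ker (LinearMap.proj u) ⊓ LinearMap.ker (LinearMap.proj v) := by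
  rw [span_le]
  rintro _ ⟨j, rfl⟩
  refine ⟨?_, ?_⟩ <;> simp only [SetLike.mem_coe, LinearMap.mem_ker, LinearMap.coe_proj,
    Function.eval, col_apply, updateCol_updateRow_zero_apply]
  · simp
  · split_ifs with h
    · rfl
    · exact hrow j fun hj ↦ h (Or.inr hj)

theorem rank_eq_rank_updateCol_updateRow_add_two [Fintype n] (huv : u ≠ v) (hSuv : S u v ≠ 0)
    (hSvu : S v u ≠ 0) (hrow : ∀ j ≠ u, S v j = 0) (hcol : ∀ i ≠ u, S i v = 0) :
    S.rank = ((S.updateRow u 0).updateCol u 0).rank + 2 := by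
  set W := span K (range ((S.updateRow u 0).updateCol u 0).col)
  set e : n → K := Pi.single u 1
  have hpair : ∀ s t : K, (s • e + t • S.col u) u = 0 → (s • e + t • S.col u) v = 0 →
      s = 0 ∧ t = 0 := by
    intro s t hu hv
    obtain rfl : t = 0 := by simpa [e, huv.symm, hSvu] using hv
    simpa [e] using hu
  have hindep : LinearIndependent K ![e, S.col u] :=
    LinearIndependent.pair_iff.2 fun s t h ↦ hpair s t (by rw [h]; rfl) (by rw [h]; rfl)
  have hdisj : span K {e, S.col u} ⊓ W = ⊥ := by
    rw [eq_bot_iff]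
    rintro x ⟨hx, hxW⟩
    obtain ⟨s, t, rfl⟩ := mem_span_pair.1 hx
    obtain ⟨hu, hv⟩ := span_range_col_updateCol_updateRow_le hrow hxW
    obtain ⟨rfl, rfl⟩ := hpair s t hu hv
    simp
  have hP : Module.finrank K (span K {e, S.col u}) = 2 := by
    rw [← range_cons_cons_empty, finrank_span_eq_card hindep, Fintype.card_fin]
  have := finrank_sup_add_finrank_inf_eq (span K {e, S.col u}) W
  rw [hdisj, finrank_bot, hP, ← span_range_col_eq_span_pair_sup hSuv hcol,
    ← rank_eq_finrank_span_cols, ← rank_eq_finrank_span_cols] at this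
  omega

end Matrix

namespace SimpleGraph

theorem IsAcyclic.exists_adj_forall_adj_eq {V : Type*} [Finite V] {G : SimpleGraph V}
    (hG : G.IsAcyclic) {a b : V} (hab : G.Adj a b) :
    ∃ u v, G.Adj u v ∧ ∀ w, G.Adj v w → w = u := by
  have : Nonempty V := ⟨a⟩
  obtain ⟨v, _, p, hp, hmax⟩ := Walk.exists_isPath_forall_isPath_length_le_length G
  have hnil : ¬p.Nil := by
    rw [← Walk.length_eq_zero_iff]
    have := hmax a b _ (Path.singleton hab).2
    simp only [Path.singleton_coe, Walk.length_cons, Walk.length_nil] at this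
    omega
  refine ⟨p.snd, v, (p.adj_snd hnil).symm, fun w hw ↦ hG.eq_snd_of_adj_start hp hw ?_⟩
  by_contra hwp
  have := hmax _ _ _ (hp.cons (h := hw.symm) hwp)
  simp at this

variable {V : Type} [Fintype V] {G : SimpleGraph V}

lemma bddAbove_matchingSizes (G : SimpleGraph V) :
    BddAbove {k | ∃ M : G.Subgraph, M.IsMatching ∧ M.edgeSet.ncard = k} :=
  ⟨(univ : Set (Sym2 V)).ncard, by
    rintro _ ⟨M, -, rfl⟩
    exact ncard_le_ncard (subset_univ _)⟩

lemma Subgraph.IsMatching.ncard_edgeSet_le_matchingNumber {M : G.Subgraph} (hM : M.IsMatching) :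
    M.edgeSet.ncard ≤ matchingNumber G :=
  le_csSup (bddAbove_matchingSizes G) ⟨M, hM, rfl⟩

lemma exists_isMatching_ncard_edgeSet_eq_matchingNumber (G : SimpleGraph V) :
    ∃ M : G.Subgraph, M.IsMatching ∧ M.edgeSet.ncard = matchingNumber G :=
  Nat.sSup_mem ⟨0, show ∃ M : G.Subgraph, M.IsMatching ∧ M.edgeSet.ncard = 0 from
    ⟨⊥, fun _ h ↦ h.elim, by simp⟩⟩ (bddAbove_matchingSizes G)

lemma matchingNumber_bot : matchingNumber (⊥ : SimpleGraph V) = 0 := by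
  obtain ⟨M, -, hM⟩ := exists_isMatching_ncard_edgeSet_eq_matchingNumber (⊥ : SimpleGraph V)
  have : M.edgeSet = ∅ := subset_empty_iff.1 (edgeSet_bot (V := V) ▸ M.edgeSet_subset)
  rw [← hM, this, ncard_empty]

lemma Subgraph.IsMatching.ncard_edgeSet_le_ncard_filter_add_one {M : G.Subgraph}
    (hM : M.IsMatching) (x : V) : M.edgeSet.ncard ≤ {e ∈ M.edgeSet | x ∉ e}.ncard + 1 := by
  have hsub : M.edgeSet ⊆ {e ∈ M.edgeSet | x ∉ e} ∪ {e ∈ M.edgeSet | x ∈ e} := by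
    intro e he
    by_cases hx : x ∈ e
    exacts [Or.inr ⟨he, hx⟩, Or.inl ⟨he, hx⟩]
  have hx : {e ∈ M.edgeSet | x ∈ e}.ncard ≤ 1 := by
    rw [ncard_le_one]
    rintro e ⟨he, hxe⟩ e' ⟨he', hxe'⟩
    obtain ⟨a, rfl⟩ := Sym2.mem_iff_exists.1 hxe
    obtain ⟨b, rfl⟩ := Sym2.mem_iff_exists.1 hxe'
    rw [hM.eq_of_adj_left (Subgraph.mem_edgeSet.1 he) (Subgraph.mem_edgeSet.1 he')]
  exact (ncard_le_ncard hsub).trans ((ncard_union_le _ _).trans (by omega))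

lemma matchingNumber_le_matchingNumber_deleteIncidenceSet_add_one (G : SimpleGraph V) (x : V) :
    matchingNumber G ≤ matchingNumber (G.deleteIncidenceSet x) + 1 := by
  obtain ⟨M, hM, hcard⟩ := exists_isMatching_ncard_edgeSet_eq_matchingNumber G
  let M' : (G.deleteIncidenceSet x).Subgraph :=
    { verts := {a | ∃ b, M.Adj a b ∧ a ≠ x ∧ b ≠ x}
      Adj a b := M.Adj a b ∧ a ≠ x ∧ b ≠ x
      adj_sub h := deleteIncidenceSet_adj.2 ⟨M.adj_sub h.1, h.2⟩
      edge_vert h := ⟨_, h⟩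
      symm := ⟨fun _ _ h ↦ ⟨h.1.symm, h.2.2, h.2.1⟩⟩ }
  have hM' : M'.IsMatching := by
    rintro a ⟨b, hab⟩
    exact ⟨b, hab, fun c hac ↦ hM.eq_of_adj_left hac.1 hab.1⟩
  have hedge : M'.edgeSet = {e ∈ M.edgeSet | x ∉ e} := by
    ext e
    induction e using Sym2.ind with
    | h a b => simp [M', eq_comm]
  rw [← hcard]
  exact (hM.ncard_edgeSet_le_ncard_filter_add_one x).trans
    (by grw [← hedge, hM'.ncard_edgeSet_le_matchingNumber])

lemma matchingNumber_deleteIncidenceSet_add_one_le {u v : V} (huv : G.Adj u v)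
    (hv : ∀ w, G.Adj v w → w = u) :
    matchingNumber (G.deleteIncidenceSet u) + 1 ≤ matchingNumber G := by
  obtain ⟨M', hM', hcard⟩ :=
    exists_isMatching_ncard_edgeSet_eq_matchingNumber (G.deleteIncidenceSet u)
  let M := M'.map (Hom.ofLE (G.deleteIncidenceSet_le u)) ⊔ G.subgraphOfAdj huv
  have hdisj : Disjoint (M'.map (Hom.ofLE (G.deleteIncidenceSet_le u))).support
      (G.subgraphOfAdj huv).support := by
    rw [Set.disjoint_right]
    rintro w hw ⟨w', hww'⟩
    simp only [support_subgraphOfAdj, mem_insert_iff, mem_singleton_iff, Subgraph.map_adj,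
      Hom.coe_ofLE, Relation.map_id_id, mem_ofPred_eq] at hw hww'
    have := deleteIncidenceSet_adj.1 (M'.adj_sub hww')
    rcases hw with rfl | rfl
    · exact this.2.1 rfl
    · exact this.2.2 (hv _ this.1)
  have hM : M.IsMatching := (hM'.map_ofLE _).sup (.subgraphOfAdj huv) hdisj
  have huv' : s(u, v) ∉ M'.edgeSet := fun h ↦
    (deleteIncidenceSet_adj.1 (M'.adj_sub h)).2.1 rfl
  have hedge : M.edgeSet = insert s(u, v) M'.edgeSet := by
    simp [M, Subgraph.edgeSet_sup, union_comm]
  have := hM.ncard_edgeSet_le_matchingNumber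
  rwa [hedge, ncard_insert_of_notMem huv', hcard] at this

lemma matchingNumber_eq_matchingNumber_deleteIncidenceSet_add_one {u v : V} (huv : G.Adj u v)
    (hv : ∀ w, G.Adj v w → w = u) :
    matchingNumber G = matchingNumber (G.deleteIncidenceSet u) + 1 :=
  (matchingNumber_le_matchingNumber_deleteIncidenceSet_add_one G u).antisymm
    (matchingNumber_deleteIncidenceSet_add_one_le huv hv)

end SimpleGraph

open SimpleGraph

lemma IsSkewAdjacencyOf.deleteIncidenceSet {V : Type} [Fintype V] [DecidableEq V]
    {S : Matrix V V ℝ} {G : SimpleGraph V} (hS : IsSkewAdjacencyOf S G) (u : V) :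
    IsSkewAdjacencyOf ((S.updateRow u 0).updateCol u 0) (G.deleteIncidenceSet u) := by
  obtain ⟨⟨hskew, hent⟩, hadj⟩ := hS
  refine ⟨⟨?_, fun i j ↦ ?_⟩, fun i j ↦ ?_⟩
  · ext i j
    have := congrFun (congrFun hskew i) j
    simp only [Matrix.transpose_apply, Matrix.neg_apply] at this ⊢
    simp only [Matrix.updateCol_updateRow_zero_apply]
    split_ifs <;> first | tauto | simp
  · rw [Matrix.updateCol_updateRow_zero_apply]
    split_ifs
    exacts [Or.inl rfl, hent i j]
  · rw [Matrix.updateCol_updateRow_zero_apply, deleteIncidenceSet_adj, ← hadj]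
    split_ifs <;> tauto

theorem rank_eq_two_mul_matchingNumber_of_isAcyclic {V : Type} [Fintype V] [DecidableEq V]
    {G : SimpleGraph V} (hG : G.IsAcyclic) {S : Matrix V V ℝ} (hS : IsSkewAdjacencyOf S G) :
    S.rank = 2 * matchingNumber G := by
  induction G using WellFoundedLT.induction generalizing S with
  | _ G ih =>
    obtain rfl | hne := eq_or_ne G ⊥
    · obtain rfl : S = 0 := by
        ext i j
        exact not_not.1 fun h ↦ (hS.2 i j).1 h
      rw [Matrix.rank_zero, matchingNumber_bot, mul_zero]
    obtain ⟨a, b, hab⟩ := ne_bot_iff_exists_adj.1 hne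
    obtain ⟨u, v, huv, hv⟩ := hG.exists_adj_forall_adj_eq hab
    have hrow : ∀ j ≠ u, S v j = 0 := fun j hj ↦ not_not.1 fun h ↦ hj (hv j ((hS.2 v j).1 h))
    have hcol : ∀ i ≠ u, S i v = 0 := fun i hi ↦ not_not.1 fun h ↦ hi (hv i ((hS.2 i v).1 h).symm)
    have hlt : G.deleteIncidenceSet u < G :=
      (deleteIncidenceSet_le G u).lt_of_not_ge fun h ↦ (deleteIncidenceSet_adj.1 (h huv)).2.1 rfl
    rw [Matrix.rank_eq_rank_updateCol_updateRow_add_two huv.ne ((hS.2 u v).2 huv)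
        ((hS.2 v u).2 huv.symm) hrow hcol,
      ih _ hlt (hG.anti hlt.le) (hS.deleteIncidenceSet u),
      matchingNumber_eq_matchingNumber_deleteIncidenceSet_add_one huv hv]
    ring

/-- The skew-rank of any oriented tree equals twice its matching number. -/
theorem skewRank_tree
    {V : Type} [Fintype V] [DecidableEq V] (G : SimpleGraph V)
    (hG : G.IsTree) (S : Matrix V V ℝ) (hS : IsSkewAdjacencyOf S G) :
    S.rank = 2 * matchingNumber G :=
  rank_eq_two_mul_matchingNumber_of_isAcyclic hG.isAcyclic hS
end

section
/- Let P_n^σ be any orientation of the path on n vertices. Then sr(P_n^σ) = n - 1 if n is odd, and sr(P_n^σ) = n if n is even. -/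
lemma succAbove_val {n : ℕ} (p : Fin (n+1)) (i : Fin n) :
    ((p.succAbove i : Fin (n+1)) : ℕ) = if (i : ℕ) < (p : ℕ) then (i : ℕ) else (i : ℕ) + 1 := by
  by_cases h : (i : ℕ) < (p : ℕ)
  · rw [if_pos h, Fin.succAbove_of_castSucc_lt _ _ (by simpa [Fin.lt_def] using h),
      Fin.coe_castSucc]
  · rw [if_neg h, Fin.succAbove_of_le_castSucc _ _ (by simp [Fin.le_def]; omega), Fin.val_succ]

lemma path_mat_zero {n : ℕ} {S : Matrix (Fin n) (Fin n) ℝ}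
    (h : ∀ i j : Fin n, S i j ≠ 0 ↔ ((i : ℕ) + 1 = j ∨ (j : ℕ) + 1 = i))
    {i j : Fin n} (hij : ¬((i : ℕ) + 1 = j ∨ (j : ℕ) + 1 = i)) : S i j = 0 := by
  by_contra hc
  exact hij ((h i j).mp hc)

lemma path_det_ne_zero : ∀ n : ℕ, Even n → ∀ S : Matrix (Fin n) (Fin n) ℝ,
    (∀ i j : Fin n, S i j ≠ 0 ↔ ((i : ℕ) + 1 = j ∨ (j : ℕ) + 1 = i)) → S.det ≠ 0 := by
  intro n
  induction n using Nat.strong_induction_on with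
  | _ n ih =>
  match n with
  | 0 => intro _ S _; simp
  | 1 => intro h; exact absurd h (by decide)
  | (k+2) =>
    intro he S hS
    have hek : Even k := by rcases he with ⟨r, hr⟩; exact ⟨r - 1, by omega⟩
    set i0 : Fin (k+2) := ⟨k, by omega⟩ with hi0
    set jl : Fin (k+2) := ⟨k+1, by omega⟩ with hjl
    -- first expansion along column jl
    have hexp1 : S.det = (-1 : ℝ) ^ ((i0 : ℕ) + (jl : ℕ)) * S i0 jl *
        (S.submatrix i0.succAbove jl.succAbove).det := by
      rw [Matrix.det_succ_column S jl]
      refine Finset.sum_eq_single i0 (fun b _ hb => ?_) (fun h => absurd (Finset.mem_univ _) h)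
      have : S b jl = 0 := by
        apply path_mat_zero hS
        have hb' : (b : ℕ) ≠ k := fun hc => hb (Fin.ext hc)
        simp only [hjl]
        omega
      rw [this]; ring
    set M := S.submatrix i0.succAbove jl.succAbove with hM
    have hMval : ∀ j : Fin (k+1), M (Fin.last k) j = S jl (jl.succAbove j) := by
      intro j
      have : i0.succAbove (Fin.last k) = jl := by
        apply Fin.ext
        rw [succAbove_val]
        simp [hi0, hjl]
      rw [hM, Matrix.submatrix_apply, this]
    have hexp2 : M.det = (-1 : ℝ) ^ ((Fin.last k : ℕ) + (Fin.last k : ℕ)) *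
        M (Fin.last k) (Fin.last k) *
        (M.submatrix (Fin.last k).succAbove (Fin.last k).succAbove).det := by
      rw [Matrix.det_succ_row M (Fin.last k)]
      refine Finset.sum_eq_single (Fin.last k) (fun b _ hb => ?_) (fun h => absurd (Finset.mem_univ _) h)
      have : M (Fin.last k) b = 0 := by
        rw [hMval]
        apply path_mat_zero hS
        have hb' : (b : ℕ) ≠ k := fun hc => hb (Fin.ext hc)
        have hv : ((jl.succAbove b : Fin (k+2)) : ℕ) = if (b : ℕ) < k + 1 then (b : ℕ) else (b : ℕ) + 1 := succAbove_val jl b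
        have hbk : (b : ℕ) < k + 1 := b.isLt
        simp only [hjl]
        rw [hv, if_pos hbk]
        omega
      rw [this]; ring
    -- the inner submatrix
    set T : Matrix (Fin k) (Fin k) ℝ :=
      S.submatrix (fun a : Fin k => (⟨a, by omega⟩ : Fin (k+2))) (fun a : Fin k => (⟨a, by omega⟩ : Fin (k+2))) with hT
    have hTeq : M.submatrix (Fin.last k).succAbove (Fin.last k).succAbove = T := by
      funext a b
      simp only [hM, Matrix.submatrix_apply, hT]
      have ha := a.isLt
      have hb := b.isLt
      congr 1
      · apply Fin.ext
        rw [Fin.succAbove_last, succAbove_val, Fin.coe_castSucc,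
          if_pos (show (a : ℕ) < (i0 : ℕ) from ha)]
      · apply Fin.ext
        rw [Fin.succAbove_last, succAbove_val, Fin.coe_castSucc,
          if_pos (show (b : ℕ) < (jl : ℕ) by simp only [hjl]; omega)]
    have h1 : S i0 jl ≠ 0 := (hS i0 jl).mpr (Or.inl rfl)
    have hsa : jl.succAbove (Fin.last k) = i0 := by
      apply Fin.ext
      rw [succAbove_val]
      simp [hi0, hjl, Fin.last]
    have h2 : M (Fin.last k) (Fin.last k) ≠ 0 := by
      rw [hMval, hsa]
      exact (hS jl i0).mpr (Or.inr rfl)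
    have h3 : T.det ≠ 0 := by
      apply ih k (by omega) hek
      intro a b
      rw [hT, Matrix.submatrix_apply, hS]
    rw [hexp1, hexp2, hTeq]
    exact mul_ne_zero (mul_ne_zero (pow_ne_zero _ (by norm_num)) h1)
      (mul_ne_zero (mul_ne_zero (pow_ne_zero _ (by norm_num)) h2) h3)

lemma rank_submatrix_le'' {m n : ℕ} (A : Matrix (Fin n) (Fin n) ℝ) (f g : Fin m → Fin n) :
    (A.submatrix f g).rank ≤ A.rank := by
  have h : A.submatrix f g =
      ((1 : Matrix (Fin n) (Fin n) ℝ).submatrix f (Equiv.refl (Fin n))) * A *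
        ((1 : Matrix (Fin n) (Fin n) ℝ).submatrix (Equiv.refl (Fin n)) g) := by
    rw [Matrix.mul_submatrix_one, Matrix.one_submatrix_mul]
    simp [Matrix.submatrix_submatrix]
  rw [h]
  exact le_trans (Matrix.rank_mul_le_left _ _) (Matrix.rank_mul_le_right _ _)

/-- The skew-rank of any orientation of the path on n vertices is n - 1
if n is odd and n if n is even. -/
theorem skewRank_path
    (n : ℕ) (S : Matrix (Fin n) (Fin n) ℝ)
    (hS : IsSkewAdjacencyOf S (SimpleGraph.pathGraph n)) :
    S.rank = if Odd n then n - 1 else n := by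
  obtain ⟨⟨hskew, _⟩, hadj⟩ := hS
  have hS' : ∀ i j : Fin n, S i j ≠ 0 ↔ ((i : ℕ) + 1 = j ∨ (j : ℕ) + 1 = i) := by
    intro i j
    rw [hadj, SimpleGraph.pathGraph_adj]
  by_cases hodd : Odd n
  · rw [if_pos hodd]
    have hn1 : 1 ≤ n := hodd.pos
    -- determinant vanishes
    have hdet : S.det = 0 := by
      have h1 : S.det = (-1 : ℝ) ^ n * S.det := by
        conv_lhs => rw [← Matrix.det_transpose, hskew]
        rw [Matrix.det_neg, Fintype.card_fin]
      rw [Odd.neg_one_pow hodd] at h1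
      linarith
    -- upper bound
    have hrn : S.rank + Module.finrank ℝ (LinearMap.ker S.mulVecLin) = n := by
      have := LinearMap.finrank_range_add_finrank_ker S.mulVecLin
      rwa [Module.finrank_pi, Fintype.card_fin] at this
    have hker : 0 < Module.finrank ℝ (LinearMap.ker S.mulVecLin) := by
      obtain ⟨v, hv0, hv⟩ := Matrix.exists_mulVec_eq_zero_iff.mpr hdet
      have hvmem : v ∈ LinearMap.ker S.mulVecLin := by
        rwa [LinearMap.mem_ker, Matrix.mulVecLin_apply]
      have : Nontrivial (LinearMap.ker S.mulVecLin) :=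
        ⟨⟨v, hvmem⟩, 0, fun hc => hv0 (by simpa using congrArg Subtype.val hc)⟩
      exact Module.finrank_pos
    -- lower bound via even principal submatrix
    set f : Fin (n - 1) → Fin n := fun a => ⟨a, by omega⟩ with hf
    set B : Matrix (Fin (n - 1)) (Fin (n - 1)) ℝ := S.submatrix f f with hB
    have hBeven : Even (n - 1) := by
      rcases hodd with ⟨r, hr⟩
      exact ⟨r, by omega⟩
    have hBdet : B.det ≠ 0 := by
      apply path_det_ne_zero (n - 1) hBeven
      intro a b
      rw [hB, Matrix.submatrix_apply, hS']
    have hBrank : B.rank = n - 1 := by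
      rw [Matrix.rank_of_isUnit B ((Matrix.isUnit_iff_isUnit_det B).mpr
        (isUnit_iff_ne_zero.mpr hBdet)), Fintype.card_fin]
    have hle : B.rank ≤ S.rank := rank_submatrix_le'' S f f
    omega
  · rw [if_neg hodd]
    have heven : Even n := Nat.not_odd_iff_even.mp hodd
    have hdet : S.det ≠ 0 := path_det_ne_zero n heven S hS'
    rw [Matrix.rank_of_isUnit S ((Matrix.isUnit_iff_isUnit_det S).mpr
      (isUnit_iff_ne_zero.mpr hdet)), Fintype.card_fin]
end

section
/- Let C_n^σ be an oriented cycle on n vertices. Then sr(C_n^σ) = n if C_n^σ is oddly-oriented, sr(C_n^σ) = n - 2 if C_n^σ is evenly-oriented, and sr(C_n^σ) = n - 1 otherwise (i.e., when n is odd). -/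
/-!
Write `s i = S i (i + 1) = ±1`. A vector `x` lies in the kernel of `S` iff
`s i * x (i + 1) = s (i - 1) * x (i - 1)` for all `i`,
i.e. `x (i + 1) = s i * s (i - 1) * x (i - 1)`.
Such an `x` is determined by `x 0` and `x 1`, and walking once around the cycle in double steps
multiplies `x a` by `P = ∏ i, s i = ±1`. For odd `n` the double steps reach every vertex, so the
kernel has dimension at most one, and it is nonzero because a skew-symmetric matrix of odd order
is singular. For even `n` the two parity classes decouple: if `P = -1` the kernel is trivial,
while if `P = 1` the partial products `∏ j < i, s j` and their alternating twist
`(-1) ^ i * ∏ j < i, s j` span a two-dimensional kernel.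
-/

open Finset

section CyclicRecurrence

open Fin.NatCast Fin.CommRing

variable {R : Type*} [CommRing R] {n : ℕ} [NeZero n]

theorem Fin.add_one_ne_sub_one (hn : 3 ≤ n) (i : Fin n) : i + 1 ≠ i - 1 := by
  intro h
  have h2 : ((2 : ℕ) : Fin n) = 0 := by push_cast; linear_combination h
  rw [Fin.natCast_eq_zero] at h2
  exact absurd (Nat.le_of_dvd two_pos h2) (by omega)

theorem Fin.eq_zero_of_twoStep {c x : Fin n → R} (hx : ∀ i, x (i + 1) = c i * x (i - 1))
    (h0 : x 0 = 0) (h1 : x 1 = 0) : x = 0 := by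
  have key : ∀ k : ℕ, x k = 0 ∧ x (k + 1) = 0 := by
    intro k
    induction k with
    | zero => simpa using ⟨h0, h1⟩
    | succ k ih =>
      refine ⟨by simpa using ih.2, ?_⟩
      rw [hx]
      simp [ih.1]
  funext i
  simpa using (key i).1

theorem Fin.twoStep_iterate {s x : Fin n → R}
    (hx : ∀ i, x (i + 1) = s i * s (i - 1) * x (i - 1)) (a : Fin n) (m : ℕ) :
    x (a + (2 * m : ℕ)) = (∏ j ∈ range (2 * m), s (a + j)) * x a := by
  induction m with
  | zero => simp
  | succ m ih =>
    have h := hx (a + (2 * m + 1 : ℕ))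
    rw [show a + ((2 * m + 1 : ℕ) : Fin n) - 1 = a + (2 * m : ℕ) by push_cast; ring, ih] at h
    rw [show a + ((2 * m + 1 : ℕ) : Fin n) + 1 = a + (2 * (m + 1) : ℕ) by push_cast; ring] at h
    rw [h, show 2 * (m + 1) = 2 * m + 1 + 1 by ring, prod_range_succ, prod_range_succ]
    push_cast
    ring

theorem Fin.prod_range_add_eq_prod_univ (s : Fin n → R) (a : Fin n) :
    ∏ j ∈ range n, s (a + j) = ∏ i, s i := by
  rw [← Fin.prod_univ_eq_prod_range (fun j => s (a + j))]
  simpa using Equiv.prod_comp (Equiv.addLeft a) s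

theorem Fin.twoStep_monodromy {s x : Fin n → R}
    (hx : ∀ i, x (i + 1) = s i * s (i - 1) * x (i - 1)) (heven : Even n) (a : Fin n) :
    x a = (∏ i, s i) * x a := by
  have h := twoStep_iterate hx a (n / 2)
  rwa [Nat.two_mul_div_two_of_even heven, Fin.natCast_self, add_zero,
    prod_range_add_eq_prod_univ] at h

def Fin.cyclePotential (s : Fin n → R) (i : Fin n) : R :=
  ∏ j ∈ range i.val, s j

theorem Fin.cyclePotential_add_one {s : Fin n → R} (hs : ∏ i, s i = 1) (i : Fin n) :
    cyclePotential s (i + 1) = cyclePotential s i * s i := by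
  unfold cyclePotential
  by_cases hi : i.val + 1 < n
  · rw [Fin.val_add_one_of_lt' hi, prod_range_succ, Fin.cast_val_eq_self]
  · have hval : (i + 1).val = 0 := by
      rw [Fin.val_add, Fin.val_one', Nat.add_mod_mod]
      exact Nat.mod_eq_zero_of_dvd ⟨1, by omega⟩
    have hfull := prod_range_succ (fun j : ℕ => s j) i.val
    rw [Fin.cast_val_eq_self, show i.val + 1 = n by omega] at hfull
    rw [hval, prod_range_zero, ← hfull, ← Fin.prod_univ_eq_prod_range (fun j : ℕ => s j)]
    simpa using hs.symm

theorem Fin.twoStep_of_forall_add_one {ε : R} (hε : ε * ε = 1) {s y : Fin n → R}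
    (hy : ∀ i, y (i + 1) = ε * s i * y i) (i : Fin n) :
    y (i + 1) = s i * s (i - 1) * y (i - 1) := by
  have hprev := hy (i - 1)
  rw [sub_add_cancel] at hprev
  rw [hy, hprev]
  linear_combination (s i * s (i - 1) * y (i - 1)) * hε

theorem Fin.twoStep_cyclePotential {s : Fin n → R} (hs : ∏ i, s i = 1) (i : Fin n) :
    cyclePotential s (i + 1) = s i * s (i - 1) * cyclePotential s (i - 1) :=
  twoStep_of_forall_add_one (one_mul 1) (fun j => by rw [cyclePotential_add_one hs]; ring) i

theorem Fin.neg_one_pow_val_add_one (hn : Even n) (i : Fin n) :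
    (-1 : R) ^ (i + 1).val = -(-1) ^ i.val := by
  rw [Fin.val_add, Fin.val_one', Nat.add_mod_mod, neg_one_pow_eq_pow_mod_two,
    Nat.mod_mod_of_dvd _ (even_iff_two_dvd.mp hn), ← neg_one_pow_eq_pow_mod_two, pow_succ]
  ring

theorem Fin.twoStep_alternating_cyclePotential (hn : Even n) {s : Fin n → R}
    (hs : ∏ i, s i = 1) (i : Fin n) :
    (-1) ^ (i + 1).val * cyclePotential s (i + 1) =
      s i * s (i - 1) * ((-1) ^ (i - 1).val * cyclePotential s (i - 1)) := by
  refine twoStep_of_forall_add_one (y := fun j => (-1) ^ j.val * cyclePotential s j)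
    (by ring : (-1 : R) * -1 = 1) (fun j => ?_) i
  rw [neg_one_pow_val_add_one hn, cyclePotential_add_one hs]
  ring

end CyclicRecurrence

theorem Submodule.finrank_le_card_of_forall_eq_zero {K ι : Type*} [Field K] [Fintype ι]
    (V : Submodule K (ι → K)) (T : Finset ι) (hV : ∀ x ∈ V, (∀ i ∈ T, x i = 0) → x = 0) :
    Module.finrank K V ≤ T.card := by
  let restrict : V →ₗ[K] T → K := (LinearMap.funLeft K K ((↑) : T → ι)).comp V.subtype
  have hinj : Function.Injective restrict := by
    refine (injective_iff_map_eq_zero restrict).mpr fun x hx => Subtype.ext ?_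
    exact hV x x.2 fun i hi => congrFun hx ⟨i, hi⟩
  simpa using LinearMap.finrank_le_finrank_of_injective hinj

theorem Matrix.rank_add_finrank_ker {K m ι : Type*} [Field K] [Fintype ι] [Fintype m]
    (A : Matrix m ι K) :
    A.rank + Module.finrank K (LinearMap.ker A.mulVecLin) = Fintype.card ι := by
  rw [Matrix.rank, LinearMap.finrank_range_add_finrank_ker, Module.finrank_fintype_fun_eq_card]

theorem Matrix.det_eq_zero_of_transpose_eq_neg {R ι : Type*} [CommRing R] [NoZeroDivisors R]
    [CharZero R] [Fintype ι] [DecidableEq ι] {A : Matrix ι ι R} (hA : A.transpose = -A)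
    (hodd : Odd (Fintype.card ι)) : A.det = 0 := by
  have h := congrArg Matrix.det hA
  rw [Matrix.det_transpose, Matrix.det_neg, hodd.neg_one_pow, neg_one_mul] at h
  exact self_eq_neg.mp h

theorem IsSkewAdjacency.apply_swap {V : Type} [Fintype V] [DecidableEq V] {S : Matrix V V ℝ}
    (hS : IsSkewAdjacency S) (i j : V) : S j i = -S i j := by
  simpa using congrFun (congrFun hS.1 i) j

section CycleSkewAdjacency

open Fin.NatCast Fin.CommRing Module Matrix

variable {n : ℕ} [NeZero n] {S : Matrix (Fin n) (Fin n) ℝ}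

namespace IsSkewAdjacency

variable (hS : IsSkewAdjacency S) (hadj : ∀ i j : Fin n, S i j ≠ 0 ↔ (j = i + 1 ∨ i = j + 1))
include hS hadj

theorem cycle_entry_mul_self (i : Fin n) : S i (i + 1) * S i (i + 1) = 1 := by
  rcases hS.2 i (i + 1) with h | h | h
  · exact absurd h ((hadj i (i + 1)).mpr (Or.inl rfl))
  all_goals simp [h]

theorem cycle_prod_mul_self : (∏ i, S i (i + 1)) * ∏ i, S i (i + 1) = 1 := by
  rw [← prod_mul_distrib, prod_congr rfl fun i _ => hS.cycle_entry_mul_self hadj i, prod_const_one]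

theorem cycle_mulVec_apply (hn : 3 ≤ n) (x : Fin n → ℝ) (i : Fin n) :
    (S *ᵥ x) i = S i (i + 1) * x (i + 1) - S (i - 1) (i - 1 + 1) * x (i - 1) := by
  have hsupp : ∀ j ∉ ({i + 1, i - 1} : Finset (Fin n)), S i j * x j = 0 := by
    intro j hj
    simp only [mem_insert, mem_singleton, not_or] at hj
    refine mul_eq_zero_of_left (not_ne_iff.mp fun h => ?_) _
    rcases (hadj i j).mp h with h | h
    exacts [hj.1 h, hj.2 (eq_sub_of_add_eq h.symm)]
  rw [Matrix.mulVec, dotProduct, ← sum_subset (subset_univ _) fun j _ hj => hsupp j hj,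
    sum_pair (Fin.add_one_ne_sub_one hn i), sub_add_cancel, hS.apply_swap (i - 1) i]
  ring

theorem cycle_mulVec_eq_zero_iff (hn : 3 ≤ n) (x : Fin n → ℝ) :
    S *ᵥ x = 0 ↔ ∀ i, x (i + 1) = S i (i + 1) * S (i - 1) (i - 1 + 1) * x (i - 1) := by
  simp only [funext_iff, Pi.zero_apply, hS.cycle_mulVec_apply hadj hn, sub_eq_zero]
  refine forall_congr' fun i => ⟨fun h => ?_, fun h => ?_⟩
  · linear_combination S i (i + 1) * h - x (i + 1) * hS.cycle_entry_mul_self hadj i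
  · linear_combination S i (i + 1) * h +
      S (i - 1) (i - 1 + 1) * x (i - 1) * hS.cycle_entry_mul_self hadj i

theorem cycle_mem_ker_iff (hn : 3 ≤ n) (x : Fin n → ℝ) :
    x ∈ LinearMap.ker S.mulVecLin ↔
      ∀ i, x (i + 1) = S i (i + 1) * S (i - 1) (i - 1 + 1) * x (i - 1) := by
  rw [LinearMap.mem_ker, mulVecLin_apply, hS.cycle_mulVec_eq_zero_iff hadj hn]

theorem cycle_finrank_ker_le_two (hn : 3 ≤ n) : finrank ℝ (LinearMap.ker S.mulVecLin) ≤ 2 := by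
  refine (Submodule.finrank_le_card_of_forall_eq_zero _ {0, 1} fun x hx h01 => ?_).trans
    card_le_two
  exact Fin.eq_zero_of_twoStep ((hS.cycle_mem_ker_iff hadj hn x).mp hx) (h01 0 (by simp))
    (h01 1 (by simp))

theorem cycle_finrank_ker_of_odd (hn : 3 ≤ n) (hodd : Odd n) :
    finrank ℝ (LinearMap.ker S.mulVecLin) = 1 := by
  apply le_antisymm
  · refine (Submodule.finrank_le_card_of_forall_eq_zero _ {0} fun x hx h0 => ?_).trans_eq
      (card_singleton _)
    have hrec := (hS.cycle_mem_ker_iff hadj hn x).mp hx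
    have hx0 : x 0 = 0 := h0 0 (mem_singleton_self _)
    -- `(n + 1) / 2` double steps lead from `0` to `n + 1 ≡ 1`
    have hx1 := Fin.twoStep_iterate hrec 0 ((n + 1) / 2)
    rw [Nat.two_mul_div_two_of_even hodd.add_one, Nat.cast_add, Fin.natCast_self, zero_add,
      zero_add, Nat.cast_one, hx0, mul_zero] at hx1
    exact Fin.eq_zero_of_twoStep hrec hx0 hx1
  · obtain ⟨v, hv0, hv⟩ := exists_mulVec_eq_zero_iff.mpr
      (det_eq_zero_of_transpose_eq_neg hS.1 (by rwa [Fintype.card_fin]))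
    refine Nat.one_le_iff_ne_zero.mpr fun h => hv0 ?_
    rw [Submodule.finrank_eq_zero] at h
    simpa [h] using (LinearMap.mem_ker (f := S.mulVecLin)).mpr hv

theorem cycle_ker_eq_bot_of_prod_ne_one (hn : 3 ≤ n) (heven : Even n)
    (hP : ∏ i, S i (i + 1) ≠ 1) : LinearMap.ker S.mulVecLin = ⊥ := by
  refine (Submodule.eq_bot_iff _).mpr fun x hx => funext fun a => ?_
  have h := Fin.twoStep_monodromy ((hS.cycle_mem_ker_iff hadj hn x).mp hx) heven a
  by_contra hxa
  exact hP (mul_right_cancel₀ hxa (by rw [one_mul, ← h]))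

theorem cycle_finrank_ker_of_prod_eq_one (hn : 3 ≤ n) (heven : Even n)
    (hP : ∏ i, S i (i + 1) = 1) : finrank ℝ (LinearMap.ker S.mulVecLin) = 2 := by
  have hd := (hS.cycle_mem_ker_iff hadj hn _).mpr (Fin.twoStep_cyclePotential hP)
  have hy := (hS.cycle_mem_ker_iff hadj hn fun i => (-1) ^ i.val * Fin.cyclePotential _ i).mpr
    (Fin.twoStep_alternating_cyclePotential heven hP)
  have h1n : 1 % n = 1 := Nat.mod_eq_of_lt (by omega)
  have hs0 : S 0 1 ≠ 0 := (hadj 0 1).mpr (Or.inl (zero_add 1).symm)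
  have hli : LinearIndependent ℝ ![(⟨_, hd⟩ : LinearMap.ker S.mulVecLin), ⟨_, hy⟩] := by
    rw [LinearIndependent.pair_iff]
    intro a b hab
    have h0 : a + b = 0 := by
      simpa [Fin.cyclePotential] using congrFun (congrArg Subtype.val hab) 0
    have h1 : a * S 0 1 - b * S 0 1 = 0 := by
      simpa [Fin.cyclePotential, h1n, sub_eq_add_neg] using
        congrFun (congrArg Subtype.val hab) 1
    have hsub : (a - b) * S 0 1 = 0 := by linear_combination h1
    have hab' := (mul_eq_zero.mp hsub).resolve_right hs0
    constructor <;> linarith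
  refine le_antisymm (hS.cycle_finrank_ker_le_two hadj hn) ?_
  simpa using hli.fintype_card_le_finrank

end IsSkewAdjacency

end CycleSkewAdjacency

/-- The skew-rank of an oriented cycle on n vertices: n if oddly-oriented,
n - 2 if evenly-oriented, and n - 1 otherwise (i.e. when n is odd). -/
theorem skewRank_cycle
    (n : ℕ) [NeZero n] (hn : 3 ≤ n) (S : Matrix (Fin n) (Fin n) ℝ)
    (hS : IsSkewAdjacency S)
    (hadj : ∀ i j : Fin n, S i j ≠ 0 ↔ (j = i + 1 ∨ i = j + 1)) :
    (Even n → (∏ i : Fin n, S i (i + 1)) < 0 → S.rank = n) ∧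
    (Even n → 0 < (∏ i : Fin n, S i (i + 1)) → S.rank = n - 2) ∧
    (Odd n → S.rank = n - 1) := by
  have hrank := S.rank_add_finrank_ker
  rw [Fintype.card_fin] at hrank
  have hP := hS.cycle_prod_mul_self hadj
  refine ⟨fun heven hneg => ?_, fun heven hpos => ?_, fun hodd => ?_⟩
  · rw [hS.cycle_ker_eq_bot_of_prod_ne_one hadj hn heven (hneg.trans one_pos).ne,
      finrank_bot] at hrank
    omega
  · have hP1 := (mul_self_eq_one_iff.mp hP).resolve_right (by linarith)
    rw [hS.cycle_finrank_ker_of_prod_eq_one hadj hn heven hP1] at hrank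
    omega
  · rw [hS.cycle_finrank_ker_of_odd hadj hn hodd] at hrank
    omega
end

section
/- If an oriented graph G^σ contains a pendant vertex v whose unique neighbor is u, then sr(G^σ) = sr(G^σ - u - v) + 2. -/
open Matrix LinearMap Module

lemma myRange_prodMap {R M M₂ M₃ M₄ : Type*} [Ring R] [AddCommGroup M] [AddCommGroup M₂]
    [AddCommGroup M₃] [AddCommGroup M₄] [Module R M] [Module R M₂] [Module R M₃] [Module R M₄]
    (f : M →ₗ[R] M₃) (g : M₂ →ₗ[R] M₄) :
    LinearMap.range (f.prodMap g) = (LinearMap.range f).prod (LinearMap.range g) := by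
  ext ⟨a, b⟩
  simp only [LinearMap.mem_range, Submodule.mem_prod, LinearMap.prodMap_apply, Prod.mk.injEq,
    Prod.ext_iff]
  constructor
  · rintro ⟨⟨x, y⟩, hx, hy⟩; exact ⟨⟨x, hx⟩, ⟨y, hy⟩⟩
  · rintro ⟨⟨x, hx⟩, ⟨y, hy⟩⟩; exact ⟨(x, y), hx, hy⟩

lemma myFinrank_prod {R M N : Type*} [DivisionRing R] [AddCommGroup M] [AddCommGroup N]
    [Module R M] [Module R N] [FiniteDimensional R M] [FiniteDimensional R N]
    (p : Submodule R M) (q : Submodule R N) :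
    finrank R (p.prod q) = finrank R p + finrank R q := by
  have e : (p.prod q) ≃ₗ[R] p × q :=
    { toFun := fun x => (⟨x.1.1, x.2.1⟩, ⟨x.1.2, x.2.2⟩)
      invFun := fun x => ⟨(x.1.1, x.2.1), ⟨x.1.2, x.2.2⟩⟩
      map_add' := fun x y => rfl
      map_smul' := fun r x => rfl
      left_inv := fun x => rfl
      right_inv := fun x => rfl }
  rw [e.finrank_eq, Module.finrank_prod]

lemma myRank_fromBlocks {m n : Type} [Fintype m] [Fintype n] [DecidableEq m] [DecidableEq n]
    (A : Matrix m m ℝ) (B : Matrix n n ℝ) :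
    (Matrix.fromBlocks A 0 0 B).rank = A.rank + B.rank := by
  set e := LinearEquiv.sumArrowLequivProdArrow m n ℝ ℝ with he
  have key : (Matrix.fromBlocks A 0 0 B).mulVecLin =
      (e.symm.toLinearMap ∘ₗ (A.mulVecLin.prodMap B.mulVecLin)) ∘ₗ e.toLinearMap := by
    apply LinearMap.ext; intro x
    have hx : (Matrix.fromBlocks A 0 0 B).mulVecLin x
        = Matrix.fromBlocks A 0 0 B *ᵥ Sum.elim (x ∘ Sum.inl) (x ∘ Sum.inr) := by
      rw [Sum.elim_comp_inl_inr]; rfl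
    rw [hx, Matrix.fromBlocks_mulVec]
    simp only [Matrix.zero_mulVec, add_zero, zero_add]
    rfl
  rw [Matrix.rank, key, LinearMap.range_comp, LinearEquiv.range, Submodule.map_top,
    LinearMap.range_comp]
  rw [LinearEquiv.finrank_map_eq e.symm, myRange_prodMap, myFinrank_prod]
  rfl


lemma myRank_isUnit_mul {n : Type} [Fintype n] [DecidableEq n] (P A : Matrix n n ℝ)
    (h : IsUnit P) : (P * A).rank = A.rank := by
  obtain ⟨U, rfl⟩ := h
  refine le_antisymm (Matrix.rank_mul_le_right _ _) ?_
  calc A.rank = ((↑U⁻¹ : Matrix n n ℝ) * ((U : Matrix n n ℝ) * A)).rank := by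
        rw [← mul_assoc, Units.inv_mul, one_mul]
    _ ≤ ((U : Matrix n n ℝ) * A).rank := Matrix.rank_mul_le_right _ _

lemma myRank_mul_isUnit {n : Type} [Fintype n] [DecidableEq n] (A Q : Matrix n n ℝ)
    (h : IsUnit Q) : (A * Q).rank = A.rank := by
  obtain ⟨U, rfl⟩ := h
  refine le_antisymm (Matrix.rank_mul_le_left _ _) ?_
  calc A.rank = ((A * (U : Matrix n n ℝ)) * (↑U⁻¹ : Matrix n n ℝ)).rank := by
        rw [mul_assoc, Units.mul_inv, mul_one]
    _ ≤ (A * (U : Matrix n n ℝ)).rank := Matrix.rank_mul_le_left _ _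

/-- Deleting a pendant vertex v together with its unique neighbour u
decreases the skew-rank by exactly 2. -/
theorem skewRank_delete_pendant
    {V : Type} [Fintype V] [DecidableEq V] (G : SimpleGraph V)
    (S : Matrix V V ℝ) (hS : IsSkewAdjacencyOf S G)
    (v u : V) (hadj : G.Adj v u) (hpend : ∀ w : V, G.Adj v w → w = u) :
    S.rank =
      (S.submatrix (fun w : {w : V // w ≠ u ∧ w ≠ v} => (w : V))
        (fun w : {w : V // w ≠ u ∧ w ≠ v} => (w : V))).rank + 2 := by
  obtain ⟨⟨hskewT, _⟩, hadjS⟩ := hS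
  have hvu : v ≠ u := hadj.ne
  have hskew : ∀ i j, S i j = - S j i := by
    intro i j
    have := congrFun (congrFun hskewT j) i
    simpa [Matrix.transpose_apply, Matrix.neg_apply] using this
  have hdiag : ∀ i, S i i = 0 := by intro i; have := hskew i i; linarith
  set a := S v u with ha_def
  have ha : a ≠ 0 := (hadjS v u).mpr hadj
  have hrow : ∀ j, j ≠ u → S v j = 0 := by
    intro j hj
    by_contra h
    exact hj (hpend j ((hadjS v j).mp h))
  have hcol : ∀ i, i ≠ u → S i v = 0 := by
    intro i hi
    rw [hskew i v, hrow i hi, neg_zero]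
  set c : V → ℝ := fun i => S i u / a with hc
  set N : Matrix V V ℝ := Matrix.of (fun i j => if j = v ∧ i ≠ v then c i else 0) with hN
  have hNmul : ∀ M : Matrix V V ℝ,
      N * M = Matrix.of (fun i j => if i = v then 0 else c i * M v j) := by
    intro M
    ext i j
    rw [Matrix.mul_apply, Finset.sum_eq_single v]
    · by_cases hi : i = v <;> simp [hN, hi]
    · intro k _ hk; simp [hN, hk]
    · simp
  have hmulNT : ∀ M : Matrix V V ℝ,
      M * Nᵀ = Matrix.of (fun i j => if j = v then 0 else M i v * c j) := by
    intro M
    ext i j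
    rw [Matrix.mul_apply, Finset.sum_eq_single v]
    · by_cases hj : j = v <;> simp [hN, hj, Matrix.transpose_apply]
    · intro k _ hk; simp [hN, hk, Matrix.transpose_apply]
    · simp
  have hNN : N * N = 0 := by
    rw [hNmul]
    ext i j
    by_cases hi : i = v <;> simp [hN, hi]
  set E : Matrix V V ℝ := 1 - N with hE
  have hE1 : E * (1 + N) = 1 := by
    have : E * (1 + N) = 1 - N * N := by rw [hE]; noncomm_ring
    rw [this, hNN, sub_zero]
  have hE2 : (1 + N) * E = 1 := by
    have : (1 + N) * E = 1 - N * N := by rw [hE]; noncomm_ring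
    rw [this, hNN, sub_zero]
  have hEunit : IsUnit E := ⟨⟨E, 1 + N, hE1, hE2⟩, rfl⟩
  have hETunit : IsUnit Eᵀ :=
    ⟨⟨Eᵀ, (1 + N)ᵀ, by rw [← Matrix.transpose_mul, hE2, Matrix.transpose_one],
      by rw [← Matrix.transpose_mul, hE1, Matrix.transpose_one]⟩, rfl⟩
  set T := E * S * Eᵀ with hT_def
  have hrank : T.rank = S.rank := by
    rw [hT_def, myRank_mul_isUnit _ _ hETunit, myRank_isUnit_mul _ _ hEunit]
  have hT : T = Matrix.of (fun i j =>
      if i = v then (if j = u then a else 0)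
      else if j = v then (if i = u then -a else 0)
      else if i = u ∨ j = u then 0 else S i j) := by
    have expand : T = S - N * S - S * Nᵀ + N * (S * Nᵀ) := by
      rw [hT_def, hE, Matrix.transpose_sub, Matrix.transpose_one]
      noncomm_ring
    rw [expand, hmulNT S, hNmul S, hNmul _]
    ext i j
    simp only [Matrix.sub_apply, Matrix.add_apply, Matrix.of_apply]
    by_cases hiv : i = v
    · by_cases hju : j = u
      · simp [hiv, hju, hdiag, ← ha_def, if_neg (show ¬ (u = v) from hvu.symm)]
      · by_cases hjv : j = v
        · simp [hiv, hjv, hdiag, if_neg (show ¬ (v = u) from hvu)]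
        · simp [hiv, hju, hjv, hdiag, hrow j hju]
    · by_cases hjv : j = v
      · by_cases hiu : i = u
        · simp [hjv, hiv, hiu, hdiag, hskew u v, ← ha_def, Ne.symm hvu]
        · simp [hjv, hiv, hiu, hdiag, hcol i hiu]
      · by_cases hju : j = u
        · simp [hiv, hju, Ne.symm hvu, hdiag, hc, ← ha_def, zero_div,
            div_mul_cancel₀ _ ha]
        · by_cases hiu : i = u
          · simp only [hiu, hiv, hjv, hju, hrow j hju, hdiag, hc,
              hskew u v, hskew u j, ← ha_def, if_neg, mul_zero, zero_mul, sub_zero,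
              add_zero, if_false]
            simp only [Ne.symm hvu, if_false, eq_self_iff_true, if_true, true_or]
            field_simp
            ring
          · simp [hiv, hjv, hiu, hju, hrow j hju, hcol i hiu, hdiag]
  -- the reindexing equivalence
  let e : Fin 2 ⊕ {w : V // w ≠ u ∧ w ≠ v} ≃ V :=
    { toFun := Sum.elim ![v, u] Subtype.val
      invFun := fun w =>
        if h1 : w = v then Sum.inl 0
        else if h2 : w = u then Sum.inl 1 else Sum.inr ⟨w, h2, h1⟩
      left_inv := by
        rintro (i | ⟨w, hw1, hw2⟩)
        · fin_cases i <;> simp [Ne.symm hvu]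
        · simp [hw1, hw2]
      right_inv := by
        intro w
        by_cases h1 : w = v
        · simp [h1]
        · by_cases h2 : w = u <;> simp [h1, h2, Ne.symm hvu] }
  set A2 : Matrix (Fin 2) (Fin 2) ℝ := !![0, a; -a, 0] with hA2def
  set B := S.submatrix (fun w : {w : V // w ≠ u ∧ w ≠ v} => (w : V))
      (fun w : {w : V // w ≠ u ∧ w ≠ v} => (w : V)) with hBdef
  have hblock : T.submatrix e e = Matrix.fromBlocks A2 0 0 B := by
    rw [hT]
    ext i j
    rcases i with i | ⟨wi, hwi1, hwi2⟩ <;> rcases j with j | ⟨wj, hwj1, hwj2⟩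
    · fin_cases i <;> fin_cases j <;>
        simp [e, hA2def, hvu, hvu.symm, Matrix.fromBlocks]
    · fin_cases i <;> simp [e, hwj1, hwj2, Matrix.fromBlocks]
    · fin_cases j <;> simp [e, hwi1, hwi2, Matrix.fromBlocks]
    · simp [e, hwi1, hwi2, hwj1, hwj2, hBdef, Matrix.fromBlocks]
  have hA2rank : A2.rank = 2 := by
    have hdet : A2.det = a * a := by
      rw [hA2def, Matrix.det_fin_two_of]; ring
    have hunit : IsUnit A2 := by
      rw [Matrix.isUnit_iff_isUnit_det, hdet]
      exact (mul_ne_zero ha ha).isUnit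
    rw [Matrix.rank_of_isUnit _ hunit, Fintype.card_fin]
  calc S.rank = T.rank := hrank.symm
    _ = (T.submatrix e e).rank := (Matrix.rank_submatrix T e e).symm
    _ = (Matrix.fromBlocks A2 0 0 B).rank := by rw [hblock]
    _ = A2.rank + B.rank := myRank_fromBlocks _ _
    _ = B.rank + 2 := by rw [hA2rank, Nat.add_comm]
end

section
/- If u and v are uniform twins or opposite twins in an oriented graph G^σ, then sr(G^σ) = sr(G^σ - u) = sr(G^σ - v). -/
namespace Matrix

variable {m n K : Type*} [Field K]

theorem rank_submatrix_row_ne_of_row_eq_smul [Finite m] [Fintype n] (A : Matrix m n K)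
    {u v : m} (hvu : v ≠ u) (c : K) (h : A.row u = c • A.row v) :
    (A.submatrix (fun i : {i // i ≠ u} => (i : m)) id).rank = A.rank := by
  have hmem : A.row u ∈ Submodule.span K (A.row '' {u}ᶜ) :=
    h ▸ Submodule.smul_mem _ c (Submodule.subset_span ⟨v, hvu, rfl⟩)
  rw [rank_eq_finrank_span_row, rank_eq_finrank_span_row,
    ← Set.insert_image_compl_eq_range A.row u, Submodule.span_insert_eq_span hmem,
    Set.image_eq_range]
  rfl

theorem rank_submatrix_col_ne_of_col_eq_smul [Fintype m] [Fintype n] [DecidableEq n]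
    (A : Matrix m n K) {u v : n} (hvu : v ≠ u) (c : K) (h : A.col u = c • A.col v) :
    (A.submatrix id (fun j : {j // j ≠ u} => (j : n))).rank = A.rank := by
  rw [← rank_transpose, transpose_submatrix, ← rank_transpose A]
  exact Aᵀ.rank_submatrix_row_ne_of_row_eq_smul hvu c h

theorem rank_submatrix_ne_of_row_eq_smul_of_col_eq_smul [Fintype m] [DecidableEq m]
    (A : Matrix m m K) {u v : m} (hvu : v ≠ u) (c c' : K) (hrow : A.row u = c • A.row v)
    (hcol : A.col u = c' • A.col v) :
    (A.submatrix (fun i : {i // i ≠ u} => (i : m)) (fun i : {i // i ≠ u} => (i : m))).rank =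
      A.rank := by
  have hcol' : (A.submatrix (fun i : {i // i ≠ u} => (i : m)) id).col u =
      c' • (A.submatrix (fun i : {i // i ≠ u} => (i : m)) id).col v := by
    ext i
    exact congrFun hcol i
  rw [← A.rank_submatrix_row_ne_of_row_eq_smul hvu c hrow,
    ← rank_submatrix_col_ne_of_col_eq_smul _ hvu c' hcol']
  rfl

theorem rank_submatrix_ne_of_transpose_eq_neg_of_row_eq_smul [Fintype m] [DecidableEq m]
    (A : Matrix m m K) (hA : Aᵀ = -A) {u v : m} (hvu : v ≠ u) (c : K)
    (h : A.row u = c • A.row v) :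
    (A.submatrix (fun i : {i // i ≠ u} => (i : m)) (fun i : {i // i ≠ u} => (i : m))).rank =
      A.rank := by
  refine A.rank_submatrix_ne_of_row_eq_smul_of_col_eq_smul hvu c c h ?_
  rw [col, hA]
  ext j
  simpa using congrFun h j

end Matrix

theorem skewRank_delete_twin_general
    {V : Type} [Fintype V] [DecidableEq V]
    (S : Matrix V V ℝ) (hS : IsSkewAdjacency S)
    (u v : V) (huv : u ≠ v)
    (htwin : (∀ w : V, S u w = S v w) ∨ (∀ w : V, S u w = -S v w)) :
    S.rank =
      (S.submatrix (fun w : {w : V // w ≠ u} => (w : V))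
        (fun w : {w : V // w ≠ u} => (w : V))).rank ∧
    S.rank =
      (S.submatrix (fun w : {w : V // w ≠ v} => (w : V))
        (fun w : {w : V // w ≠ v} => (w : V))).rank := by
  obtain ⟨c, hu, hv⟩ : ∃ c : ℝ, S.row u = c • S.row v ∧ S.row v = c • S.row u := by
    rcases htwin with h | h
    · refine ⟨1, ?_, ?_⟩ <;> ext w <;> simp [Matrix.row, h w]
    · refine ⟨-1, ?_, ?_⟩ <;> ext w <;> simp [Matrix.row, h w]
  exact ⟨(S.rank_submatrix_ne_of_transpose_eq_neg_of_row_eq_smul hS.1 huv.symm c hu).symm,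
    (S.rank_submatrix_ne_of_transpose_eq_neg_of_row_eq_smul hS.1 huv c hv).symm⟩

/-- Deleting a uniform or opposite twin does not change the skew-rank. -/
theorem skewRank_delete_twin
    {V : Type} [Fintype V] [DecidableEq V]
    (S : Matrix V V ℝ) (hS : IsSkewAdjacency S)
    (u v : V) (huv : u ≠ v) (hnadj : S u v = 0)
    (htwin : (∀ w : V, S u w = S v w) ∨ (∀ w : V, S u w = -S v w)) :
    S.rank =
      (S.submatrix (fun w : {w : V // w ≠ u} => (w : V))
        (fun w : {w : V // w ≠ u} => (w : V))).rank ∧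
    S.rank =
      (S.submatrix (fun w : {w : V // w ≠ v} => (w : V))
        (fun w : {w : V // w ≠ v} => (w : V))).rank :=
  skewRank_delete_twin_general S hS u v huv htwin
end

section
/- In an oriented complete multipartite graph, if every 4-vertex cycle is evenly-oriented, then any two vertices in the same partite set are uniform twins or opposite twins. -/
/-!
Fix `u ≠ v` in one partite set and put `σ w = S u w * S v w`. Off the partite set `σ w = ±1`,
on it `σ w = 0`. For `w₁ ≠ w₂` off the partite set, `w₁ u w₂ v` is a 4-cycle, and by
skew-symmetry its sign is `σ w₁ * σ w₂`, so `σ` has constant sign off the partite set: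
`σ ≡ 1` makes `u, v` uniform twins, `σ ≡ -1` opposite twins.
-/

section SignVectors

variable {R : Type*} [CommRing R] [LinearOrder R] [IsStrictOrderedRing R]

lemma eq_neg_of_mul_nonpos_of_sign {a b : R} (ha : a = 0 ∨ a = 1 ∨ a = -1)
    (hab : a = 0 ↔ b = 0) (hb : b = 0 ∨ b = 1 ∨ b = -1) (h : a * b ≤ 0) : a = -b := by
  rcases ha with rfl | rfl | rfl <;> rcases hb with rfl | rfl | rfl <;> norm_num at *

lemma mul_eq_neg_one_of_ne_of_sign {a b : R} (ha : a = 0 ∨ a = 1 ∨ a = -1)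
    (hab : a = 0 ↔ b = 0) (hb : b = 0 ∨ b = 1 ∨ b = -1) (hne : a ≠ b) : a * b = -1 := by
  rcases ha with rfl | rfl | rfl <;> rcases hb with rfl | rfl | rfl <;> norm_num at *

lemma eq_or_eq_neg_of_mul_mul_nonneg {α : Type*} {f g : α → R}
    (hf : ∀ w, f w = 0 ∨ f w = 1 ∨ f w = -1) (hfg : ∀ w, f w = 0 ↔ g w = 0)
    (hg : ∀ w, g w = 0 ∨ g w = 1 ∨ g w = -1) (hsign : ∀ w₁ w₂, 0 ≤ f w₁ * g w₁ * (f w₂ * g w₂)) :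
    (∀ w, f w = g w) ∨ ∀ w, f w = -g w := by
  refine or_iff_not_imp_left.mpr fun hne => ?_
  push Not at hne
  obtain ⟨w₀, hw₀⟩ := hne
  have hfg₀ : f w₀ * g w₀ = -1 := mul_eq_neg_one_of_ne_of_sign (hf w₀) (hfg w₀) (hg w₀) hw₀
  intro w
  refine eq_neg_of_mul_nonpos_of_sign (hf w) (hfg w) (hg w) ?_
  simpa only [hfg₀, neg_one_mul, neg_nonneg] using hsign w₀ w

end SignVectors

lemma apply_swap_of_transpose_eq_neg {V R : Type*} [Neg R] {S : Matrix V V R}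
    (hS : S.transpose = -S) (i j : V) : S j i = -S i j :=
  congrFun₂ hS i j

lemma row_products_mul_nonneg_of_evenly_oriented {V R : Type*} [CommRing R] [LinearOrder R]
    [IsStrictOrderedRing R] {S : Matrix V V R} (hS : S.transpose = -S)
    (heven : ∀ a b c d : V, S a b ≠ 0 → S b c ≠ 0 → S c d ≠ 0 → S d a ≠ 0 →
      a ≠ c → b ≠ d → 0 < S a b * S b c * S c d * S d a)
    {u v : V} (huv : u ≠ v) (w₁ w₂ : V) : 0 ≤ S u w₁ * S v w₁ * (S u w₂ * S v w₂) := by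
  obtain rfl | hw := eq_or_ne w₁ w₂
  · exact mul_self_nonneg _
  by_cases hzero : S u w₁ = 0 ∨ S v w₁ = 0 ∨ S u w₂ = 0 ∨ S v w₂ = 0
  · rcases hzero with h | h | h | h <;> simp [h]
  push Not at hzero
  obtain ⟨hu₁, hv₁, hu₂, hv₂⟩ := hzero
  have hswap₁ := apply_swap_of_transpose_eq_neg hS u w₁
  have hswap₂ := apply_swap_of_transpose_eq_neg hS v w₂
  have hcycle := heven w₁ u w₂ v (by rwa [hswap₁, neg_ne_zero]) hu₂
    (by rwa [hswap₂, neg_ne_zero]) hv₁ hw huv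
  rw [hswap₁, hswap₂] at hcycle
  linarith

/-- In an oriented complete multipartite graph in which every 4-vertex cycle is
evenly-oriented, any two vertices in the same partite set are uniform or
opposite twins. -/
theorem twins_of_evenly_oriented_complete_multipartite
    {V : Type} [Fintype V] [DecidableEq V] {ι : Type} (p : V → ι)
    (S : Matrix V V ℝ) (hS : IsSkewAdjacency S)
    (hadj : ∀ i j : V, S i j ≠ 0 ↔ p i ≠ p j)
    (heven : ∀ a b c d : V, S a b ≠ 0 → S b c ≠ 0 → S c d ≠ 0 → S d a ≠ 0 →
      a ≠ c → b ≠ d → 0 < S a b * S b c * S c d * S d a) :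
    ∀ u v : V, u ≠ v → p u = p v →
      (∀ w : V, S u w = S v w) ∨ (∀ w : V, S u w = -S v w) := by
  intro u v huv hpuv
  have hzero_iff : ∀ w, S u w = 0 ↔ S v w = 0 := fun w => by
    rw [← not_ne_iff, hadj, ← not_ne_iff, hadj, hpuv]
  exact eq_or_eq_neg_of_mul_mul_nonneg (hS.2 u) hzero_iff (hS.2 v)
    (row_products_mul_nonneg_of_evenly_oriented hS.1 heven huv)
end

section
/- An orientation K_{1,1,2}^σ of the complete tripartite graph K_{1,1,2} has skew-rank 2 if and only if its unique 4-vertex cycle is evenly-oriented; otherwise sr(K_{1,1,2}^σ) = 4. -/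
/-!
The skew-adjacency matrix S of an orientation of K_{1,1,2} is a 4 × 4 alternating matrix with
S 2 3 = 0, so det S is the square of its Pfaffian S 0 3 * S 1 2 - S 0 2 * S 1 3. As all these
entries are ±1, the Pfaffian vanishes exactly when S 0 2 * S 1 3 and S 0 3 * S 1 2 have the same
sign, i.e. when their product, the cycle product, is positive. If it does not vanish, S is
invertible. If it does, rows 1 and 3 are combinations of rows 0 and 2, which are independent.
-/

open Matrix

def pfaffianFinFour {R : Type*} [CommRing R] (S : Matrix (Fin 4) (Fin 4) R) : R :=
  S 0 1 * S 2 3 - S 0 2 * S 1 3 + S 0 3 * S 1 2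

theorem two_le_rank_of_det_fin_two_ne_zero {m n R : Type*} [Fintype n] [CommRing R] [IsDomain R]
    (A : Matrix m n R) (i₁ i₂ : m) (j₁ j₂ : n) (h : A i₁ j₁ * A i₂ j₂ - A i₁ j₂ * A i₂ j₁ ≠ 0) : 2 ≤ A.rank := by
  have hminor : (A.submatrix ![i₁, i₂] ![j₁, j₂]).det ≠ 0 := by rw [det_fin_two]; simpa using h
  have := rank_submatrix_le A ![i₁, i₂] ![j₁, j₂]
  rwa [rank_of_det_ne_zero hminor, Fintype.card_fin] at this

theorem alternating_fin_four_eq_mul {K : Type*} [Field K] {a b c d e f : K} (hb : b ≠ 0)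
    (hpf : a * f - b * e + c * d = 0) :
    !![0, a, b, c; -a, 0, d, e; -b, -d, 0, f; -c, -e, -f, 0] =
      !![1, 0; d / b, a / b; 0, 1; -f / b, c / b] * !![0, a, b, c; -b, -d, 0, f] := by
  ext i j
  fin_cases i <;> fin_cases j <;> simp
  all_goals grind

section Alternating

variable {R : Type*} [CommRing R] {S : Matrix (Fin 4) (Fin 4) R}
  (hskew : ∀ i j, S j i = -S i j) (hdiag : ∀ i, S i i = 0)
include hskew hdiag

theorem eq_of_alternating_fin_four :
    S = !![0, S 0 1, S 0 2, S 0 3; -S 0 1, 0, S 1 2, S 1 3; -S 0 2, -S 1 2, 0, S 2 3;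
      -S 0 3, -S 1 3, -S 2 3, 0] := by
  ext i j
  fin_cases i <;> fin_cases j <;> simp [hdiag, hskew 0 1, hskew 0 2, hskew 0 3, hskew 1 2,
    hskew 1 3, hskew 2 3]

theorem det_eq_pfaffianFinFour_sq : S.det = pfaffianFinFour S ^ 2 := by
  rw [eq_of_alternating_fin_four hskew hdiag, pfaffianFinFour]
  simp [det_succ_row_zero, Fin.sum_univ_succ, Fin.succAbove]
  ring

end Alternating

section AlternatingField

variable {K : Type*} [Field K] {S : Matrix (Fin 4) (Fin 4) K}
  (hskew : ∀ i j, S j i = -S i j) (hdiag : ∀ i, S i i = 0)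
include hskew hdiag

theorem rank_eq_four_of_pfaffianFinFour_ne_zero (hpf : pfaffianFinFour S ≠ 0) : S.rank = 4 := by
  have hdet : S.det ≠ 0 := by
    rw [det_eq_pfaffianFinFour_sq hskew hdiag]
    exact pow_ne_zero 2 hpf
  rw [rank_of_det_ne_zero hdet, Fintype.card_fin]

theorem rank_eq_two_of_pfaffianFinFour_eq_zero (hpf : pfaffianFinFour S = 0) (h02 : S 0 2 ≠ 0) :
    S.rank = 2 := by
  refine le_antisymm ?_ (two_le_rank_of_det_fin_two_ne_zero S 0 2 0 2 ?_)
  · rw [eq_of_alternating_fin_four hskew hdiag, alternating_fin_four_eq_mul h02 hpf]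
    exact (rank_mul_le_left _ _).trans (rank_le_width _)
  · rw [hdiag, hskew 0 2]
    simpa using h02

end AlternatingField

theorem eq_iff_pos_mul_of_sq_eq_one {α : Type*} [Ring α] [LinearOrder α] [IsStrictOrderedRing α]
    {x y : α} (hx : x ^ 2 = 1) (hy : y ^ 2 = 1) : x = y ↔ 0 < x * y := by
  rcases sq_eq_one_iff.1 hx with rfl | rfl <;> rcases sq_eq_one_iff.1 hy with rfl | rfl <;> norm_num

namespace IsSkewAdjacency

variable {V : Type} [Fintype V] [DecidableEq V] {S : Matrix V V ℝ}

theorem apply_swap_s13 (hS : IsSkewAdjacency S) (i j : V) : S j i = -S i j := by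
  simpa using congrFun (congrFun hS.1 i) j

theorem apply_self (hS : IsSkewAdjacency S) (i : V) : S i i = 0 := by
  linarith [hS.apply_swap_s13 i i]

theorem sq_eq_one (hS : IsSkewAdjacency S) {i j : V} (h : S i j ≠ 0) : S i j ^ 2 = 1 := by
  rcases hS.2 i j with h0 | h1 | h1
  · exact absurd h0 h
  all_goals simp [h1]

end IsSkewAdjacency

/-- Vertices 0 and 1 form the singleton parts and {2, 3} the part of size 2, so the 4-cycle is
0-2-1-3-0. -/
theorem skewRank_K112_general
    (S : Matrix (Fin 4) (Fin 4) ℝ) (hS : IsSkewAdjacency S)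
    (h23 : S 2 3 = 0)
    (h02 : S 0 2 ≠ 0) (h03 : S 0 3 ≠ 0)
    (h12 : S 1 2 ≠ 0) (h13 : S 1 3 ≠ 0) :
    (S.rank = 2 ↔ 0 < S 0 2 * S 2 1 * S 1 3 * S 3 0) ∧
    (¬ 0 < S 0 2 * S 2 1 * S 1 3 * S 3 0 → S.rank = 4) := by
  have hcycle : S 0 2 * S 2 1 * S 1 3 * S 3 0 = (S 0 2 * S 1 3) * (S 0 3 * S 1 2) := by
    rw [hS.apply_swap_s13 1 2, hS.apply_swap_s13 0 3]; ring
  have hpf : pfaffianFinFour S = S 0 3 * S 1 2 - S 0 2 * S 1 3 := by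
    rw [pfaffianFinFour, h23]; ring
  have heven : S 0 2 * S 1 3 = S 0 3 * S 1 2 ↔ 0 < S 0 2 * S 2 1 * S 1 3 * S 3 0 := by
    rw [hcycle]
    exact eq_iff_pos_mul_of_sq_eq_one (by rw [mul_pow, hS.sq_eq_one h02, hS.sq_eq_one h13, one_mul])
      (by rw [mul_pow, hS.sq_eq_one h03, hS.sq_eq_one h12, one_mul])
  have rank_four (hodd : ¬ 0 < S 0 2 * S 2 1 * S 1 3 * S 3 0) : S.rank = 4 :=
    rank_eq_four_of_pfaffianFinFour_ne_zero hS.apply_swap_s13 hS.apply_self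
      (by rw [hpf, sub_ne_zero]; exact fun h => hodd (heven.1 h.symm))
  have rank_two (hev : 0 < S 0 2 * S 2 1 * S 1 3 * S 3 0) : S.rank = 2 :=
    rank_eq_two_of_pfaffianFinFour_eq_zero hS.apply_swap_s13 hS.apply_self
      (by rw [hpf, heven.2 hev, sub_self]) h02
  refine ⟨⟨fun h2 => by_contra fun hodd => ?_, rank_two⟩, rank_four⟩
  rw [rank_four hodd] at h2
  exact absurd h2 (by norm_num)

/-- An orientation of the complete tripartite graph K_{1,1,2} (with parts
{0}, {1}, {2,3}) has skew-rank 2 iff its unique 4-vertex cycle 0-2-1-3-0 is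
evenly-oriented; otherwise its skew-rank is 4. -/
theorem skewRank_K112
    (S : Matrix (Fin 4) (Fin 4) ℝ) (hS : IsSkewAdjacency S)
    (h23 : S 2 3 = 0)
    (h01 : S 0 1 ≠ 0) (h02 : S 0 2 ≠ 0) (h03 : S 0 3 ≠ 0)
    (h12 : S 1 2 ≠ 0) (h13 : S 1 3 ≠ 0) :
    (S.rank = 2 ↔ 0 < S 0 2 * S 2 1 * S 1 3 * S 3 0) ∧
    (¬ 0 < S 0 2 * S 2 1 * S 1 3 * S 3 0 → S.rank = 4) :=
  skewRank_K112_general S hS h23 h02 h03 h12 h13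
end

section
/- Let G^σ be a connected oriented graph of order n ≥ 5. Then sr(G^σ) = 2 if and only if the underlying graph of G^σ is a complete bipartite or complete tripartite graph and every 4-vertex cycle in G^σ is evenly-oriented. -/
open Matrix

namespace Matrix

section CommRing

variable {R : Type*} [CommRing R] [StrongRankCondition R]

theorem rank_le_rank_submatrix_of_row_eq_smul {m : Type*} [Fintype m] [DecidableEq m]
    {A : Matrix m m R} (h : Aᵀ = -A) {c : m → m} {ε : m → R}
    (hrow : ∀ i j, A i j = ε i * A (c i) j) : A.rank ≤ (A.submatrix c c).rank := by
  have hA : ∀ i j, A j i = -A i j := fun i j => by simpa using congrFun₂ h i j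
  have hfac : A = diagonal ε * A.submatrix c c * diagonal ε := by
    ext i j
    rw [mul_diagonal, diagonal_mul, submatrix_apply, hrow i j, hA, hrow j, hA]
    ring
  calc A.rank = (diagonal ε * A.submatrix c c * diagonal ε).rank := congrArg rank hfac
    _ ≤ (diagonal ε * A.submatrix c c).rank := rank_mul_le_left _ _
    _ ≤ (A.submatrix c c).rank := rank_mul_le_right _ _

end CommRing

variable {K : Type*} [Field K] {n : Type*}

theorem rank_lt_card_of_det_eq_zero [Fintype n] [DecidableEq n] {A : Matrix n n K}
    (h : A.det = 0) : A.rank < Fintype.card n := by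
  obtain ⟨v, hv, hAv⟩ := exists_mulVec_eq_zero_iff.mpr h
  have hker : 0 < Module.finrank K (LinearMap.ker A.mulVecLin) :=
    Module.finrank_pos_iff_exists_ne_zero.mpr
      ⟨⟨v, hAv⟩, fun hv0 => hv (congrArg Subtype.val hv0)⟩
  have := LinearMap.finrank_range_add_finrank_ker A.mulVecLin
  rw [Module.finrank_fintype_fun_eq_card] at this
  rw [rank]
  omega

variable [CharZero K]

theorem diag_eq_zero_of_transpose_eq_neg {A : Matrix n n K} (h : Aᵀ = -A) (i : n) :
    A i i = 0 := by
  have := congrFun₂ h i i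
  simp only [transpose_apply, neg_apply] at this
  exact self_eq_neg.mp this

theorem det_eq_zero_of_transpose_eq_neg_s15 [Fintype n] [DecidableEq n] {A : Matrix n n K}
    (h : Aᵀ = -A) (hn : Odd (Fintype.card n)) : A.det = 0 := by
  have := congrArg det h
  rw [det_transpose, det_neg, hn.neg_one_pow, neg_one_mul] at this
  exact self_eq_neg.mp this

theorem det_fin_four_of_transpose_eq_neg {A : Matrix (Fin 4) (Fin 4) K} (h : Aᵀ = -A) :
    A.det = (A 0 1 * A 2 3 - A 0 2 * A 1 3 + A 0 3 * A 1 2) ^ 2 := by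
  have hA : ∀ i j, A j i = -A i j := fun i j => by simpa using congrFun₂ h i j
  have hd := diag_eq_zero_of_transpose_eq_neg h
  have : A = !![0, A 0 1, A 0 2, A 0 3; -A 0 1, 0, A 1 2, A 1 3;
      -A 0 2, -A 1 2, 0, A 2 3; -A 0 3, -A 1 3, -A 2 3, 0] := by
    ext i j; fin_cases i <;> fin_cases j <;> simp [hd, ← hA]
  rw [this, det_succ_row_zero]
  simp [Fin.sum_univ_succ, det_fin_three, Fin.succAbove]
  ring

theorem plucker_of_rank_le_two {m : Type*} [Fintype m] {A : Matrix m m K} (h : Aᵀ = -A)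
    (hr : A.rank ≤ 2) (a b c d : m) :
    A a b * A c d - A a c * A b d + A a d * A b c = 0 := by
  set B := A.submatrix ![a, b, c, d] ![a, b, c, d]
  have hB : Bᵀ = -B := by rw [transpose_submatrix, h]; rfl
  have hdet : B.det = 0 := by
    by_contra hne
    have := (rank_of_det_ne_zero hne).symm.trans_le ((rank_submatrix_le _ _ _).trans hr)
    simp at this
  rw [det_fin_four_of_transpose_eq_neg hB] at hdet
  simpa [B] using hdet

theorem two_le_rank_of_transpose_eq_neg {m : Type*} [Fintype m] {A : Matrix m m K}
    (h : Aᵀ = -A) {a b : m} (hab : A a b ≠ 0) : 2 ≤ A.rank := by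
  have hA : A b a = -A a b := by simpa using congrFun₂ h a b
  have hdet : (A.submatrix ![a, b] ![a, b]).det ≠ 0 := by
    rw [det_fin_two]
    simp [diag_eq_zero_of_transpose_eq_neg h, hA, hab]
  simpa using (rank_of_det_ne_zero hdet).symm.trans_le (rank_submatrix_le _ _ _)

end Matrix

theorem SimpleGraph.IsCompleteMultipartite.exists_adj_iff_ne {α : Type*} {G : SimpleGraph α}
    {n : ℕ} (h : G.IsCompleteMultipartite) (hc : G.CliqueFree (n + 1)) :
    ∃ p : α → Fin n, ∀ u v, G.Adj u v ↔ p u ≠ p v := by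
  obtain ⟨C⟩ : G.Colorable n := by simpa using h.colorable_of_cliqueFree hc
  let s := h.setoid
  have hs : ∀ u v, s.r u v ↔ ¬ G.Adj u v := fun _ _ => Iff.rfl
  -- Colour each vertex by the colour of its part's representative; distinct parts are adjacent.
  refine ⟨fun v => C (Quotient.mk s v).out, fun u v => ⟨fun huv hC => ?_, fun hne => ?_⟩⟩
  · have hout : s.r (Quotient.mk s u).out (Quotient.mk s v).out :=
      (hs _ _).mpr fun hadj => C.valid hadj hC
    exact (hs u v).mp
      (s.trans (s.symm (Quotient.mk_out u)) (s.trans hout (Quotient.mk_out v))) huv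
  · by_contra huv
    exact hne (congrArg (fun q => C (Quotient.out q)) (Quotient.sound ((hs u v).mpr huv)))

section OrderedRing

variable {R : Type*} [CommRing R] [LinearOrder R] [IsStrictOrderedRing R]

theorem sub_add_ne_zero_of_sq_eq_one {x y z : R} (hx : x ^ 2 = 1) (hy : y ^ 2 = 1)
    (hz : z ^ 2 = 1) : x - y + z ≠ 0 := by
  intro h
  have hy' : y = x + z := by linarith
  subst hy'
  nlinarith

theorem eq_of_sq_eq_one_of_mul_pos {x y : R} (hx : x ^ 2 = 1) (hy : y ^ 2 = 1)
    (hxy : 0 < x * y) : x = y := by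
  rw [sq, mul_self_eq_one_iff] at hx hy
  rcases hx with rfl | rfl <;> rcases hy with rfl | rfl <;> first | rfl | norm_num at hxy

end OrderedRing

def AllFourCyclesEvenlyOriented {V : Type} (S : Matrix V V ℝ) (G : SimpleGraph V) : Prop :=
  ∀ a b c d : V, G.Adj a b → G.Adj b c → G.Adj c d → G.Adj d a → a ≠ c → b ≠ d →
    0 < S a b * S b c * S c d * S d a

namespace IsSkewAdjacencyOf

variable {V : Type} [Fintype V] [DecidableEq V] {S : Matrix V V ℝ} {G : SimpleGraph V}

theorem apply_comm (hS : IsSkewAdjacencyOf S G) (i j : V) : S j i = -S i j := by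
  simpa using congrFun₂ hS.1.1 i j

theorem ne_zero (hS : IsSkewAdjacencyOf S G) {i j : V} (h : G.Adj i j) : S i j ≠ 0 :=
  (hS.2 i j).mpr h

theorem eq_zero (hS : IsSkewAdjacencyOf S G) {i j : V} (h : ¬ G.Adj i j) : S i j = 0 :=
  not_not.mp (mt (hS.2 i j).mp h)

theorem sq_eq_one (hS : IsSkewAdjacencyOf S G) {i j : V} (h : G.Adj i j) : S i j ^ 2 = 1 := by
  rcases hS.1.2 i j with h0 | h1 | h1
  · exact absurd h0 (hS.ne_zero h)
  all_goals simp [h1]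

theorem mul_sq_eq_one (hS : IsSkewAdjacencyOf S G) {a b c d : V} (hab : G.Adj a b)
    (hcd : G.Adj c d) : (S a b * S c d) ^ 2 = 1 := by
  rw [mul_pow, hS.sq_eq_one hab, hS.sq_eq_one hcd, one_mul]

section RankLeTwo

variable (hS : IsSkewAdjacencyOf S G) (hr : S.rank ≤ 2)
include hS hr

theorem cliqueFree_four_of_rank_le_two : G.CliqueFree 4 := by
  rw [SimpleGraph.cliqueFree_iff]
  refine ⟨fun f => ?_⟩
  have adj : ∀ i j : Fin 4, i ≠ j → G.Adj (f i) (f j) := fun i j hij => f.toHom.map_adj hij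
  exact sub_add_ne_zero_of_sq_eq_one
    (hS.mul_sq_eq_one (adj 0 1 (by decide)) (adj 2 3 (by decide)))
    (hS.mul_sq_eq_one (adj 0 2 (by decide)) (adj 1 3 (by decide)))
    (hS.mul_sq_eq_one (adj 0 3 (by decide)) (adj 1 2 (by decide)))
    (plucker_of_rank_le_two hS.1.1 hr _ _ _ _)

theorem isCompleteMultipartite_of_rank_le_two (hnbr : ∀ v, ∃ w, G.Adj v w) :
    G.IsCompleteMultipartite := by
  refine ⟨fun i j k hij hjk hik => ?_⟩
  obtain ⟨r, hjr⟩ := hnbr j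
  have hP := plucker_of_rank_le_two hS.1.1 hr i j k r
  rw [hS.eq_zero hij, hS.eq_zero hjk] at hP
  exact mul_ne_zero (hS.ne_zero hik) (hS.ne_zero hjr) (by linarith)

theorem allFourCyclesEvenlyOriented_of_rank_le_two : AllFourCyclesEvenlyOriented S G := by
  intro a b c d hab hbc hcd hda _ _
  have hP := plucker_of_rank_le_two hS.1.1 hr a b c d
  have hdiag : S a c * S b d = 0 := by
    by_contra hne
    obtain ⟨hac, hbd⟩ := mul_ne_zero_iff.mp hne
    exact sub_add_ne_zero_of_sq_eq_one (hS.mul_sq_eq_one hab hcd)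
      (hS.mul_sq_eq_one ((hS.2 a c).mp hac) ((hS.2 b d).mp hbd))
      (hS.mul_sq_eq_one hda.symm hbc) hP
  have hopp : S a b * S c d = S b c * S d a := by
    rw [hS.apply_comm d a] at hP; linarith
  calc 0 < (S b c * S d a) ^ 2 :=
        sq_pos_of_ne_zero (mul_ne_zero (hS.ne_zero hbc) (hS.ne_zero hda))
    _ = S a b * S b c * S c d * S d a := by linear_combination (S b c * S d a) * hopp.symm

end RankLeTwo

theorem exists_row_eq_smul_of_forall_adj_iff (hS : IsSkewAdjacencyOf S G)
    (hcyc : AllFourCyclesEvenlyOriented S G) {u u' : V} (htw : ∀ j, G.Adj u j ↔ G.Adj u' j) :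
    ∃ ε : ℝ, ∀ j, S u' j = ε * S u j := by
  by_cases hu : ∃ i, G.Adj u i
  swap
  · push Not at hu
    exact ⟨0, fun j => by rw [hS.eq_zero ((not_congr (htw j)).mp (hu j)), zero_mul]⟩
  obtain ⟨i, hui⟩ := hu
  refine ⟨S u i * S u' i, fun j => ?_⟩
  by_cases huj : G.Adj u j
  swap
  · rw [hS.eq_zero huj, hS.eq_zero ((not_congr (htw j)).mp huj), mul_zero]
  have hu'i := (htw i).mp hui
  have hu'j := (htw j).mp huj
  have hsigns : S u i * S u' i = S u' j * S u j := by
    by_cases hdeg : u = u' ∨ i = j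
    · rcases hdeg with rfl | rfl
      · rw [← sq, ← sq, hS.sq_eq_one hui, hS.sq_eq_one huj]
      · ring
    push Not at hdeg
    have hpos := hcyc u i u' j hui hu'i.symm hu'j huj.symm hdeg.1 hdeg.2
    rw [hS.apply_comm u' i, hS.apply_comm u j] at hpos
    exact eq_of_sq_eq_one_of_mul_pos (hS.mul_sq_eq_one hui hu'i) (hS.mul_sq_eq_one hu'j huj)
      (by linarith)
  rw [hsigns]
  linear_combination -S u' j * hS.sq_eq_one huj

theorem rank_le_two_of_adj_iff_ne [Nonempty V] (hS : IsSkewAdjacencyOf S G)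
    (hcyc : AllFourCyclesEvenlyOriented S G) {p : V → Fin 3}
    (hp : ∀ u v, G.Adj u v ↔ p u ≠ p v) : S.rank ≤ 2 := by
  set r := Function.invFun p
  have hrp : ∀ i, p (r (p i)) = p i := fun i => Function.invFun_eq ⟨i, rfl⟩
  have hrow : ∀ i, ∃ ε : ℝ, ∀ j, S i j = ε * S (r (p i)) j := fun i =>
    hS.exists_row_eq_smul_of_forall_adj_iff hcyc fun j => by rw [hp, hp, hrp]
  choose ε hε using hrow
  have hT : (S.submatrix r r)ᵀ = -S.submatrix r r := by rw [transpose_submatrix, hS.1.1]; rfl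
  calc S.rank ≤ (S.submatrix (r ∘ p) (r ∘ p)).rank :=
        rank_le_rank_submatrix_of_row_eq_smul hS.1.1 hε
    _ = ((S.submatrix r r).submatrix p p).rank := by rw [submatrix_submatrix]
    _ ≤ (S.submatrix r r).rank := rank_submatrix_le _ _ _
    _ ≤ 2 := by
      simpa [Nat.lt_succ_iff] using
        rank_lt_card_of_det_eq_zero (det_eq_zero_of_transpose_eq_neg_s15 hT (by decide))

end IsSkewAdjacencyOf

/-- A connected oriented graph on at least 5 vertices has skew-rank 2 iff its
underlying graph is complete bipartite or complete tripartite and every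
4-vertex cycle is evenly-oriented. -/
theorem skewRank_eq_two_iff
    {V : Type} [Fintype V] [DecidableEq V] (hcard : 5 ≤ Fintype.card V)
    (G : SimpleGraph V) (hconn : G.Connected)
    (S : Matrix V V ℝ) (hS : IsSkewAdjacencyOf S G) :
    S.rank = 2 ↔
      ((∃ p : V → Fin 2, ∀ u v : V, G.Adj u v ↔ p u ≠ p v) ∨
       (∃ p : V → Fin 3, ∀ u v : V, G.Adj u v ↔ p u ≠ p v)) ∧
      (∀ a b c d : V, G.Adj a b → G.Adj b c → G.Adj c d → G.Adj d a →
        a ≠ c → b ≠ d → 0 < S a b * S b c * S c d * S d a) := by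
  have : Nontrivial V := Fintype.one_lt_card_iff_nontrivial.mp (by omega)
  have hnbr : ∀ v, ∃ w, G.Adj v w := hconn.preconnected.exists_adj_of_nontrivial
  obtain ⟨x, y, hxy⟩ : ∃ x y, G.Adj x y := ⟨_, hnbr hconn.nonempty.some⟩
  have h2 : 2 ≤ S.rank := two_le_rank_of_transpose_eq_neg hS.1.1 (hS.ne_zero hxy)
  constructor
  · intro hr
    exact ⟨Or.inr ((hS.isCompleteMultipartite_of_rank_le_two hr.le hnbr).exists_adj_iff_ne
      (hS.cliqueFree_four_of_rank_le_two hr.le)),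
      hS.allFourCyclesEvenlyOriented_of_rank_le_two hr.le⟩
  · rintro ⟨hbi | ⟨p, hp⟩, hcyc⟩
    · obtain ⟨p, hp⟩ := hbi
      refine le_antisymm (hS.rank_le_two_of_adj_iff_ne hcyc (p := Fin.castSucc ∘ p) ?_) h2
      simpa using hp
    · exact le_antisymm (hS.rank_le_two_of_adj_iff_ne hcyc hp) h2
end
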